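/- arXiv:2501.17385 — 2 statements merged into one kernel-verified Lean document; each statement's English description precedes it below -/
import Mathlib

section
/- (Lemma 2.) Fix n, a basis function w, a network (𝓒,𝓝), and a mechanism f with f_j(1) > 0 for every j. For every θ : 𝓘 → ℝ feasible for the primal LP (θ(t) ≥ 0 for all t, Σ_{t∈𝓘} [a_j f_j(A_{t,j}) − b_j f_j(A_{t,j}+1)] θ(t) ≥ 0 for every j, and Σ_{t∈𝓘} w(A_t) θ(t) = 1), there exists a resource allocation game G ∈ 𝓖 with this n, w, (𝓒,𝓝), f, an action profile a^ne of G that is a pure Nash equilibrium with W(a^ne) = 1, and an action profile a^opt of G with W(a^opt) = Σ_{t∈𝓘} w(B_t) θ(t). Consequently the supremum of W(a^opt) over games in 𝓖, pure Nash equilibria a^ne with W(a^ne) = 1 and profiles a^opt is at least the primal LP value W*. -/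
open Finset

noncomputable section

/-- A resource allocation game with `n` agents: resources `Fin m`, nonnegative
resource values `v`, and nonempty finite action sets consisting of subsets of resources. -/
structure RAGame (n : ℕ) where
  m : ℕ
  v : Fin m → ℝ
  v_nonneg : ∀ r, 0 ≤ v r
  act : Fin n → Finset (Finset (Fin m))
  act_nonempty : ∀ i, (act i).Nonempty

namespace RAGame

variable {n : ℕ}

/-- the number of agents in `S` selecting resource `r` at profile `a` -/
def cnt (G : RAGame n) (a : Fin n → Finset (Fin G.m)) (S : Finset (Fin n)) (r : Fin G.m) : ℕ :=
  (S.filter fun i => r ∈ a i).card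

/-- `a` is an action profile of the game -/
def IsProfile (G : RAGame n) (a : Fin n → Finset (Fin G.m)) : Prop := ∀ i, a i ∈ G.act i

/-- the welfare `W(a) = ∑ r, v r * w (|a|_r)` -/
def welf (G : RAGame n) (w : ℕ → ℝ) (a : Fin n → Finset (Fin G.m)) : ℝ :=
  ∑ r, G.v r * w (G.cnt a Finset.univ r)

end RAGame

/-- a basis function: `w 0 = 0` and `w j > 0` for `1 ≤ j ≤ n` -/
def IsBasis (n : ℕ) (w : ℕ → ℝ) : Prop :=
  w 0 = 0 ∧ ∀ j, 1 ≤ j → j ≤ n → 0 < w j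

/-- An information network on `n` agents partitioned into `k` (nonempty) classes, namely
the fibers of `cls` (`cls` surjective says every class is nonempty), where each agent of
class `j` observes exactly the agents in `Nb j`;  `Nb j` contains the class `j` itself
and is a union of classes. -/
structure Network (n k : ℕ) where
  cls : Fin n → Fin k
  Nb : Fin k → Finset (Fin n)
  cls_surj : Function.Surjective cls
  mem_Nb : ∀ i, i ∈ Nb (cls i)
  Nb_union : ∀ (j : Fin k) (i i' : Fin n), cls i = cls i' → i ∈ Nb j → i' ∈ Nb j

namespace Network

variable {n k : ℕ}

/-- the class `𝓒_j` as a finset of agents -/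
def classSet (net : Network n k) (j : Fin k) : Finset (Fin n) :=
  Finset.univ.filter fun i => net.cls i = j

/-- `κ j = |𝓒_j|` -/
def κ (net : Network n k) (j : Fin k) : ℕ := (net.classSet j).card

end Network

/-- `f` is a utility mechanism for the network: `f_j 0 = f_j (|𝓝_j|+1) = 0` -/
def IsMech {n k : ℕ} (net : Network n k) (f : Fin k → ℕ → ℝ) : Prop :=
  ∀ j, f j 0 = 0 ∧ f j ((net.Nb j).card + 1) = 0

namespace RAGame

variable {n k : ℕ}

/-- the utility `U_i(a) = ∑_{r ∈ a i} v r * f_{cls i} (|a|_r^{𝓝_{cls i}})` -/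
def util (G : RAGame n) (net : Network n k) (f : Fin k → ℕ → ℝ)
    (a : Fin n → Finset (Fin G.m)) (i : Fin n) : ℝ :=
  ∑ r ∈ a i, G.v r * f (net.cls i) (G.cnt a (net.Nb (net.cls i)) r)

/-- `a` is a pure Nash equilibrium -/
def IsNash (G : RAGame n) (net : Network n k) (f : Fin k → ℕ → ℝ)
    (a : Fin n → Finset (Fin G.m)) : Prop :=
  G.IsProfile a ∧ ∀ (i : Fin n), ∀ b ∈ G.act i,
    G.util net f (Function.update a i b) i ≤ G.util net f a i

end RAGame

/-- the defining condition of the class `𝓖`: some profile has positive welfare -/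
def GoodGame {n : ℕ} (G : RAGame n) (w : ℕ → ℝ) : Prop :=
  ∃ a, G.IsProfile a ∧ 0 < G.welf w a

/-- (worst pure-equilibrium welfare) / (best welfare) of a single game -/
def gameRatio {n k : ℕ} (G : RAGame n) (w : ℕ → ℝ) (net : Network n k)
    (f : Fin k → ℕ → ℝ) : ℝ :=
  sInf {x | ∃ a, G.IsNash net f a ∧ x = G.welf w a} /
    sSup {x | ∃ a, G.IsProfile a ∧ x = G.welf w a}

/-- the price of anarchy `PoA(f, w, 𝓒, 𝓝)` -/
def PoA (n : ℕ) {k : ℕ} (w : ℕ → ℝ) (net : Network n k) (f : Fin k → ℕ → ℝ) : ℝ :=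
  sInf {q | ∃ G : RAGame n, GoodGame G w ∧ (∃ a, G.IsNash net f a) ∧
    q = gameRatio G w net f}

/-- index tuples `t = ((a_j, x_j, b_j))_{j ∈ [k]}` (components of size at most `n`) -/
abbrev Idx (n k : ℕ) := Fin k → Fin (n + 1) × Fin (n + 1) × Fin (n + 1)

section IdxDefs

variable {n k : ℕ}

def aI (t : Idx n k) (j : Fin k) : ℕ := ((t j).1 : ℕ)
def xI (t : Idx n k) (j : Fin k) : ℕ := ((t j).2.1 : ℕ)
def bI (t : Idx n k) (j : Fin k) : ℕ := ((t j).2.2 : ℕ)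

/-- `A_t = ∑_j (a_j + x_j)` -/
def AtI (t : Idx n k) : ℕ := ∑ j, (aI t j + xI t j)

/-- `B_t = ∑_j (b_j + x_j)` -/
def BtI (t : Idx n k) : ℕ := ∑ j, (bI t j + xI t j)

/-- `A_{t,j} = ∑_{l : 𝓒_l ⊆ 𝓝_j} (a_l + x_l)` -/
def Atj (net : Network n k) (t : Idx n k) (j : Fin k) : ℕ :=
  ∑ l ∈ Finset.univ.filter (fun l => net.classSet l ⊆ net.Nb j), (aI t l + xI t l)

end IdxDefs

/-- the index set `𝓘` -/
def Iset (n k : ℕ) (κ : Fin k → ℕ) : Finset (Idx n k) :=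
  Finset.univ.filter fun t =>
    (∀ j, aI t j + xI t j + bI t j ≤ κ j) ∧
    1 ≤ ∑ j, (aI t j + xI t j + bI t j) ∧
    ∑ j, (aI t j + xI t j + bI t j) ≤ n

/-- the reduced index set `𝓘_R` -/
def IRset (n k : ℕ) (κ : Fin k → ℕ) : Finset (Idx n k) :=
  (Iset n k κ).filter fun t =>
    ∀ j, aI t j * xI t j * bI t j = 0 ∨ aI t j + xI t j + bI t j = κ j

section LP

variable {n k : ℕ}

/-- the primal LP objective `∑_{t ∈ 𝓘} w(B_t) θ(t)` for `θ : 𝓘 → ℝ` -/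
def primalObj (n k : ℕ) (κ : Fin k → ℕ) (w : ℕ → ℝ)
    (θ : {t : Idx n k // t ∈ Iset n k κ} → ℝ) : ℝ :=
  ∑ t ∈ (Iset n k κ).attach, w (BtI t.1) * θ t

/-- feasibility for the primal LP -/
def PrimalFeasible (n k : ℕ) (net : Network n k) (w : ℕ → ℝ) (f : Fin k → ℕ → ℝ)
    (θ : {t : Idx n k // t ∈ Iset n k net.κ} → ℝ) : Prop :=
  (∀ t, 0 ≤ θ t) ∧
  (∀ j : Fin k, 0 ≤ ∑ t ∈ (Iset n k net.κ).attach,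
      ((aI t.1 j : ℝ) * f j (Atj net t.1 j) - (bI t.1 j : ℝ) * f j (Atj net t.1 j + 1)) * θ t) ∧
  ∑ t ∈ (Iset n k net.κ).attach, w (AtI t.1) * θ t = 1

/-- the set of primal objective values at feasible points; `W* = sSup` of this set -/
def PrimalVals (n k : ℕ) (net : Network n k) (w : ℕ → ℝ) (f : Fin k → ℕ → ℝ) : Set ℝ :=
  {x | ∃ θ, PrimalFeasible n k net w f θ ∧ x = primalObj n k net.κ w θ}

/-- the dual LP constraint associated to index `t` -/
def DualConstr (net : Network n k) (w : ℕ → ℝ) (f : Fin k → ℕ → ℝ)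
    (lam : Fin k → ℝ) (μ : ℝ) (t : Idx n k) : Prop :=
  w (BtI t) +
      ∑ j, lam j * ((aI t j : ℝ) * f j (Atj net t j) - (bI t j : ℝ) * f j (Atj net t j + 1))
    ≤ μ * w (AtI t)

/-- the set of dual-feasible values `μ`; `V* = sInf` of this set -/
def DualSet (n k : ℕ) (net : Network n k) (w : ℕ → ℝ) (f : Fin k → ℕ → ℝ) : Set ℝ :=
  {μ | ∃ lam : Fin k → ℝ, (∀ j, 0 ≤ lam j) ∧ ∀ t ∈ IRset n k net.κ, DualConstr net w f lam μ t}

/-- feasibility for the LP deriving the optimal mechanism (`λ` folded into `f`) -/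
def DesignFeas (n k : ℕ) (net : Network n k) (w : ℕ → ℝ) (f : Fin k → ℕ → ℝ) (μ : ℝ) : Prop :=
  IsMech net f ∧ ∀ t ∈ IRset n k net.κ,
    w (BtI t) + ∑ j, ((aI t j : ℝ) * f j (Atj net t j) - (bI t j : ℝ) * f j (Atj net t j + 1))
      ≤ μ * w (AtI t)

end LP

section Theta

variable {n k : ℕ}

/-- `𝓡(t)`: the resources whose selection signature at `(a^ne, a^opt)` is `t` -/
def Rt (G : RAGame n) (net : Network n k) (ane aopt : Fin n → Finset (Fin G.m))
    (t : Idx n k) : Finset (Fin G.m) :=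
  Finset.univ.filter fun r =>
    ∀ j : Fin k,
      G.cnt ane (net.classSet j) r = aI t j + xI t j ∧
      G.cnt aopt (net.classSet j) r = bI t j + xI t j ∧
      ((net.classSet j).filter fun i => r ∈ ane i ∧ r ∈ aopt i).card = xI t j

/-- `θ(t) = ∑_{r ∈ 𝓡(t)} v r` -/
def θof (G : RAGame n) (net : Network n k) (ane aopt : Fin n → Finset (Fin G.m))
    (t : Idx n k) : ℝ :=
  ∑ r ∈ Rt G net ane aopt t, G.v r

end Theta

section Blind

variable {n : ℕ}

/-- utility in the blind network: blind agents (members of `B`) observe only themselves -/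
def blindUtil (G : RAGame n) (B : Finset (Fin n)) (fbl : ℝ) (fnbl : ℕ → ℝ)
    (a : Fin n → Finset (Fin G.m)) (i : Fin n) : ℝ :=
  if i ∈ B then ∑ r ∈ a i, G.v r * fbl
  else ∑ r ∈ a i, G.v r * fnbl (G.cnt a Finset.univ r)

/-- pure Nash equilibrium in the blind network -/
def IsBlindNash (G : RAGame n) (B : Finset (Fin n)) (fbl : ℝ) (fnbl : ℕ → ℝ)
    (a : Fin n → Finset (Fin G.m)) : Prop :=
  G.IsProfile a ∧ ∀ (i : Fin n), ∀ b ∈ G.act i,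
    blindUtil G B fbl fnbl (Function.update a i b) i ≤ blindUtil G B fbl fnbl a i

/-- the price of anarchy for the blind network with blind agents `B` -/
def blindPoA (n : ℕ) (w : ℕ → ℝ) (B : Finset (Fin n)) (fbl : ℝ) (fnbl : ℕ → ℝ) : ℝ :=
  sInf {q | ∃ G : RAGame n, GoodGame G w ∧ (∃ a, IsBlindNash G B fbl fnbl a) ∧
    q = sInf {x | ∃ a, IsBlindNash G B fbl fnbl a ∧ x = G.welf w a} /
        sSup {x | ∃ a, G.IsProfile a ∧ x = G.welf w a}}

/-- a triple `(a, x, b)` with entries of size at most `n` -/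
abbrev Trip (n : ℕ) := Fin (n + 1) × Fin (n + 1) × Fin (n + 1)

def ta1 (t : Trip n × Trip n) : ℕ := (t.1.1 : ℕ)
def tx1 (t : Trip n × Trip n) : ℕ := (t.1.2.1 : ℕ)
def tb1 (t : Trip n × Trip n) : ℕ := (t.1.2.2 : ℕ)
def ta2 (t : Trip n × Trip n) : ℕ := (t.2.1 : ℕ)
def tx2 (t : Trip n × Trip n) : ℕ := (t.2.2.1 : ℕ)
def tb2 (t : Trip n × Trip n) : ℕ := (t.2.2.2 : ℕ)

/-- `A_t` for the two-class (blind) network; also equals `A_{t,2}` -/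
def At2 (t : Trip n × Trip n) : ℕ := ta1 t + tx1 t + ta2 t + tx2 t

/-- `B_t` for the two-class (blind) network -/
def Bt2 (t : Trip n × Trip n) : ℕ := tb1 t + tx1 t + tb2 t + tx2 t

end Blind

/-- the index set `𝓘` for the two-class (blind) network with `κ` blind agents -/
def I2 (n κ : ℕ) : Finset (Trip n × Trip n) :=
  Finset.univ.filter fun t =>
    ta1 t + tx1 t + tb1 t ≤ κ ∧ ta2 t + tx2 t + tb2 t ≤ n - κ ∧
    1 ≤ ta1 t + tx1 t + tb1 t + (ta2 t + tx2 t + tb2 t) ∧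
    ta1 t + tx1 t + tb1 t + (ta2 t + tx2 t + tb2 t) ≤ n

/-- the reduced index set `𝓘_R` for the two-class (blind) network -/
def IR2 (n κ : ℕ) : Finset (Trip n × Trip n) :=
  (I2 n κ).filter fun t =>
    (ta1 t * tx1 t * tb1 t = 0 ∨ ta1 t + tx1 t + tb1 t = κ) ∧
    (ta2 t * tx2 t * tb2 t = 0 ∨ ta2 t + tx2 t + tb2 t = n - κ)

section BlindLP

variable {n : ℕ}

/-- the dual LP constraint for the blind network at index `t` -/
def BlindDualConstr (w : ℕ → ℝ) (fnbl : ℕ → ℝ) (l1 l2 μ : ℝ) (t : Trip n × Trip n) : Prop :=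
  w (Bt2 t) + l1 * ((ta1 t : ℝ) - (tb1 t : ℝ)) +
      l2 * ((ta2 t : ℝ) * fnbl (At2 t) - (tb2 t : ℝ) * fnbl (At2 t + 1))
    ≤ μ * w (At2 t)

/-- the set of dual-feasible values `μ` for the blind network; `V* = sInf` of this set -/
def BlindDualSet (n κ : ℕ) (w : ℕ → ℝ) (fnbl : ℕ → ℝ) : Set ℝ :=
  {μ | ∃ l1 l2 : ℝ, 0 ≤ l1 ∧ 0 ≤ l2 ∧ ∀ t ∈ IR2 n κ, BlindDualConstr w fnbl l1 l2 μ t}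

/-- feasibility for the optimal-design LP of the blind network -/
def BlindDesignFeas (n κ : ℕ) (w : ℕ → ℝ) (fnbl : ℕ → ℝ) (μ : ℝ) : Prop :=
  fnbl 0 = 0 ∧ fnbl (n + 1) = 0 ∧ ∃ l : ℝ, 0 ≤ l ∧ ∀ t ∈ IR2 n κ,
    w (Bt2 t) + l * ((ta1 t : ℝ) - (tb1 t : ℝ)) + (ta2 t : ℝ) * fnbl (At2 t)
      - (tb2 t : ℝ) * fnbl (At2 t + 1) ≤ μ * w (At2 t)

/-- `𝓡(t)` for the two-class blind network with blind agents `B` -/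
def Rt2 (G : RAGame n) (B : Finset (Fin n)) (ane aopt : Fin n → Finset (Fin G.m))
    (t : Trip n × Trip n) : Finset (Fin G.m) :=
  Finset.univ.filter fun r =>
    G.cnt ane B r = ta1 t + tx1 t ∧ G.cnt aopt B r = tb1 t + tx1 t ∧
    (B.filter fun i => r ∈ ane i ∧ r ∈ aopt i).card = tx1 t ∧
    G.cnt ane Bᶜ r = ta2 t + tx2 t ∧ G.cnt aopt Bᶜ r = tb2 t + tx2 t ∧
    (Bᶜ.filter fun i => r ∈ ane i ∧ r ∈ aopt i).card = tx2 t

/-- `θ(t)` for the two-class blind network -/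
def θof2 (G : RAGame n) (B : Finset (Fin n)) (ane aopt : Fin n → Finset (Fin G.m))
    (t : Trip n × Trip n) : ℝ :=
  ∑ r ∈ Rt2 G B ane aopt t, G.v r

end BlindLP

/-- the potential function `G_j(a) = ∑_r v_r ∑_{l=1}^{|a|_r^{𝓝_j}} f_j(l)` -/
def potentialG {n k : ℕ} (G : RAGame n) (net : Network n k) (f : Fin k → ℕ → ℝ)
    (j : Fin k) (a : Fin n → Finset (Fin G.m)) : ℝ :=
  ∑ r, G.v r * ∑ l ∈ Finset.Icc 1 (G.cnt a (net.Nb j) r), f j l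

/-- the potential `G_1(a) = ∑_r v_r |a|_r^{bl}` for the class of blind agents `B` -/
def blindPotential {n : ℕ} (G : RAGame n) (B : Finset (Fin n))
    (a : Fin n → Finset (Fin G.m)) : ℝ :=
  ∑ r, G.v r * (G.cnt a B r : ℝ)

/-- the game with every resource value scaled by `c ≥ 0` -/
def RAGame.scale {n : ℕ} (G : RAGame n) (c : ℝ) (hc : 0 ≤ c) : RAGame n :=
  ⟨G.m, fun r => c * G.v r, fun r => mul_nonneg hc (G.v_nonneg r), G.act, G.act_nonempty⟩

/-- the game with the same resources but the action set of each agent `i`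
restricted to `{a i, b i}` -/
def RAGame.restrictTwo {n : ℕ} (G : RAGame n) (a b : Fin n → Finset (Fin G.m)) : RAGame n :=
  ⟨G.m, G.v, G.v_nonneg, fun i => {a i, b i}, fun i => ⟨a i, by simp⟩⟩

end

/-!
Given a feasible `θ`, seat the agents of each class `𝓒_j` on a cycle and take as resources the
pairs `(t, σ)` with `t ∈ 𝓘` and `σ` an anchor seat in every class, of value `θ t / #anchors`.
At `a^ne` the `a_j + x_j` agents of `𝓒_j` following the anchor `σ_j` select `(t, σ)`, at `a^opt`
the `x_j + b_j` agents after the first `a_j` of them. Then every resource `(t, σ)` is used by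
`A_t` agents at `a^ne` (`A_{t,j}` of them observed by class `j`) and by `B_t` agents at `a^opt`,
so the welfares are `∑ w(A_t) θ(t) = 1` and `∑ w(B_t) θ(t)`. Averaging over the anchors, an agent
of class `j` switching to its `a^opt` action loses a positive multiple of
`∑_t [a_j f_j(A_{t,j}) - b_j f_j(A_{t,j} + 1)] θ(t) ≥ 0`, so `a^ne` is an equilibrium.

For the comparison of suprema, the set of attained welfares must be bounded above: at an
equilibrium an agent earns `f_j(1) > 0` per unit of value on every unoccupied resource, so no
action is worth more than a constant times the occupied value, which is at most a constant times
the equilibrium welfare.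
-/

noncomputable section

section Counting

variable {ι α : Type*} [DecidableEq α]

lemma card_filter_update_add [DecidableEq ι] (a : ι → Finset α) {S : Finset ι} {i : ι}
    (hi : i ∈ S) (b : Finset α) (r : α) :
    #{i' ∈ S | r ∈ Function.update a i b i'} + (if r ∈ a i then 1 else 0)
      = #{i' ∈ S | r ∈ a i'} + (if r ∈ b then 1 else 0) := by
  simp only [card_filter]
  rw [← add_sum_erase S _ hi, ← add_sum_erase S _ hi, Function.update_self,
    sum_congr rfl fun i' hi' => by rw [Function.update_of_ne (ne_of_mem_erase hi')]]
  ring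

lemma sum_mul_card_filter_mem {M : Type*} [Semiring M] [Fintype α] (v : α → M) (S : Finset ι)
    (a : ι → Finset α) :
    ∑ r, v r * #{i ∈ S | r ∈ a i} = ∑ i ∈ S, ∑ r ∈ a i, v r := by
  simp only [card_filter, Nat.cast_sum, Nat.cast_ite, Nat.cast_one, Nat.cast_zero, mul_sum,
    mul_ite, mul_one, mul_zero]
  rw [sum_comm]
  exact sum_congr rfl fun i _ => by rw [← sum_filter, filter_mem_eq_inter, univ_inter]

end Counting

lemma ZMod.card_filter_val_mem_Ico {κ : ℕ} [NeZero κ] {lo hi : ℕ} (h : hi ≤ κ) :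
    #{z : ZMod κ | z.val ∈ Ico lo hi} = hi - lo := by
  rw [← Nat.card_Ico lo hi]
  refine card_nbij' ZMod.val (fun c => (c : ZMod κ)) ?_ ?_ ?_ ?_
  · intro z hz
    simpa using hz
  · intro c hc
    simp only [coe_Ico, Set.mem_Ico] at hc
    simp [ZMod.val_cast_of_lt (show c < κ by omega), hc]
  · intro z _
    simp
  · intro c hc
    simp only [coe_Ico, Set.mem_Ico] at hc
    exact ZMod.val_cast_of_lt (by omega)

lemma Fintype.sum_apply_eq_card_smul_sum {ι M : Type*} [DecidableEq ι] [Fintype ι]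
    [AddCommMonoid M] {β : ι → Type*} [∀ i, Fintype (β i)] (j : ι) (g : β j → M) :
    ∑ σ : (∀ i, β i), g (σ j) = Fintype.card (∀ i : {i // i ≠ j}, β i) • ∑ z, g z := by
  rw [Fintype.sum_equiv (Equiv.piSplitAt j β) (fun σ => g (σ j)) (fun p => g p.1) fun _ => rfl,
    Fintype.sum_prod_type, smul_sum]
  simp

namespace Network

variable {n k : ℕ} (net : Network n k)

lemma mem_classSet {j : Fin k} {i : Fin n} : i ∈ net.classSet j ↔ net.cls i = j := by
  simp [classSet]

instance (j : Fin k) : NeZero (net.κ j) :=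
  ⟨card_ne_zero.2 <| (net.cls_surj j).imp fun _ hi => net.mem_classSet.2 hi⟩

lemma card_filter_eq_sum_classSet {S : Finset (Fin n)}
    (hS : ∀ i ∈ S, ∀ i', net.cls i' = net.cls i → i' ∈ S) (P : Fin n → Prop)
    [DecidablePred P] :
    #{i ∈ S | P i} = ∑ l ∈ univ.filter (fun l => net.classSet l ⊆ S),
      #{i ∈ net.classSet l | P i} := by
  rw [card_eq_sum_card_fiberwise (f := net.cls)]
  · refine sum_congr rfl fun l hl => congrArg card ?_
    have hl : net.classSet l ⊆ S := (mem_filter.1 hl).2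
    ext i
    simp only [mem_filter, mem_classSet]
    constructor
    · rintro ⟨⟨-, hP⟩, rfl⟩
      exact ⟨rfl, hP⟩
    · rintro ⟨rfl, hP⟩
      exact ⟨⟨hl (net.mem_classSet.2 rfl), hP⟩, rfl⟩
  · intro i hi
    simp only [coe_filter, mem_univ, true_and, Set.mem_ofPred_eq]
    exact fun i' hi' => hS i (mem_filter.1 hi).1 i' (net.mem_classSet.1 hi')

lemma card_filter_eq_sum_classSet_univ (P : Fin n → Prop) [DecidablePred P] :
    #{i | P i} = ∑ l, #{i ∈ net.classSet l | P i} := by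
  rw [net.card_filter_eq_sum_classSet (fun _ _ i' _ => mem_univ i'),
    filter_true_of_mem fun l _ => subset_univ _]

def posEquiv (j : Fin k) : net.classSet j ≃ ZMod (net.κ j) :=
  (net.classSet j).equivFin.trans (ZMod.finEquiv (net.κ j)).toEquiv

/-- The seat of agent `i` on the cycle of class `j` (junk value `0` outside the class). -/
def pos (j : Fin k) (i : Fin n) : ZMod (net.κ j) :=
  if h : i ∈ net.classSet j then net.posEquiv j ⟨i, h⟩ else 0

lemma card_filter_classSet_pos (j : Fin k) (P : ZMod (net.κ j) → Prop) [DecidablePred P] :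
    #{i ∈ net.classSet j | P (net.pos j i)} = #{z | P z} := by
  refine card_nbij' (net.pos j) (fun z => ((net.posEquiv j).symm z : Fin n)) ?_ ?_ ?_ ?_
  · intro i hi
    simp only [coe_filter, Set.mem_ofPred_eq] at hi
    simpa using hi.2
  · intro z hz
    simp only [coe_filter, mem_univ, true_and, Set.mem_ofPred_eq] at hz ⊢
    refine ⟨((net.posEquiv j).symm z).2, ?_⟩
    simpa [pos] using hz
  · intro i hi
    simp only [coe_filter, Set.mem_ofPred_eq] at hi
    simp [pos, hi.1]
  · intro z _
    simp [pos]

abbrev Anchors : Type := (l : Fin k) → ZMod (net.κ l)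

abbrev Cell : Type := Iset n k net.κ × net.Anchors

-- Found directly, this instance exceeds the default size limit of instance synthesis.
instance : DecidableEq net.Cell := inferInstance

def offset (σ : net.Anchors) (i : Fin n) : ℕ := (net.pos (net.cls i) i - σ (net.cls i)).val

/-- Agent `i` selects cell `(t, σ)` when its offset from the anchor of its class lies in the
window `[lo, hi)` prescribed by `t`. -/
def windowAct (lo hi : Idx n k → Fin k → ℕ) (i : Fin n) : Finset net.Cell :=
  {ρ | net.offset ρ.2 i ∈ Ico (lo ρ.1.1 (net.cls i)) (hi ρ.1.1 (net.cls i))}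

def neAct : Fin n → Finset net.Cell :=
  net.windowAct (fun _ _ => 0) fun t j => aI t j + xI t j

def optAct : Fin n → Finset net.Cell :=
  net.windowAct aI fun t j => aI t j + xI t j + bI t j

lemma aI_add_xI_add_bI_le (t : Iset n k net.κ) (j : Fin k) :
    aI t.1 j + xI t.1 j + bI t.1 j ≤ net.κ j :=
  (mem_filter.1 t.2).2.1 j

lemma card_classSet_windowAct (lo hi : Idx n k → Fin k → ℕ) (ρ : net.Cell) (j : Fin k)
    (h : hi ρ.1.1 j ≤ net.κ j) :
    #{i ∈ net.classSet j | ρ ∈ net.windowAct lo hi i} = hi ρ.1.1 j - lo ρ.1.1 j :=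
  calc #{i ∈ net.classSet j | ρ ∈ net.windowAct lo hi i}
      = #{i ∈ net.classSet j | (net.pos j i - ρ.2 j).val ∈ Ico (lo ρ.1.1 j) (hi ρ.1.1 j)} := by
        refine congrArg card (filter_congr fun i hi => ?_)
        obtain rfl := net.mem_classSet.1 hi
        simp [windowAct, offset]
    _ = #{z : ZMod (net.κ j) | (z - ρ.2 j).val ∈ Ico (lo ρ.1.1 j) (hi ρ.1.1 j)} :=
        net.card_filter_classSet_pos j fun z => (z - ρ.2 j).val ∈ Ico _ _
    _ = #{z : ZMod (net.κ j) | z.val ∈ Ico (lo ρ.1.1 j) (hi ρ.1.1 j)} :=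
        card_equiv (Equiv.subRight (ρ.2 j)) (by simp)
    _ = hi ρ.1.1 j - lo ρ.1.1 j := ZMod.card_filter_val_mem_Ico h

lemma card_classSet_neAct (ρ : net.Cell) (j : Fin k) :
    #{i ∈ net.classSet j | ρ ∈ net.neAct i} = aI ρ.1.1 j + xI ρ.1.1 j := by
  rw [neAct, card_classSet_windowAct _ _ _ _ _ (by have := net.aI_add_xI_add_bI_le ρ.1 j; omega)]
  rfl

lemma card_classSet_optAct (ρ : net.Cell) (j : Fin k) :
    #{i ∈ net.classSet j | ρ ∈ net.optAct i} = bI ρ.1.1 j + xI ρ.1.1 j := by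
  rw [optAct, card_classSet_windowAct _ _ _ _ _ (net.aI_add_xI_add_bI_le ρ.1 j)]
  omega

lemma card_Nb_neAct (ρ : net.Cell) (j : Fin k) :
    #{i ∈ net.Nb j | ρ ∈ net.neAct i} = Atj net ρ.1.1 j := by
  rw [net.card_filter_eq_sum_classSet fun i hi i' h => net.Nb_union j i i' h.symm hi]
  exact sum_congr rfl fun l _ => net.card_classSet_neAct ρ l

lemma card_neAct (ρ : net.Cell) : #{i | ρ ∈ net.neAct i} = AtI ρ.1.1 := by
  rw [card_filter_eq_sum_classSet_univ]
  exact sum_congr rfl fun l _ => net.card_classSet_neAct ρ l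

lemma card_optAct (ρ : net.Cell) : #{i | ρ ∈ net.optAct i} = BtI ρ.1.1 := by
  rw [card_filter_eq_sum_classSet_univ]
  exact sum_congr rfl fun l _ => net.card_classSet_optAct ρ l

lemma sum_windowAct {M : Type*} [AddCommMonoid M] (lo hi : Idx n k → Fin k → ℕ) (i : Fin n)
    (h : ∀ t : Iset n k net.κ, hi t.1 (net.cls i) ≤ net.κ (net.cls i)) (g : Iset n k net.κ → M) :
    ∑ ρ ∈ net.windowAct lo hi i, g ρ.1
      = Fintype.card (∀ l : {l // l ≠ net.cls i}, ZMod (net.κ l)) •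
          ∑ t, (hi t.1 (net.cls i) - lo t.1 (net.cls i)) • g t := by
  rw [windowAct, sum_filter, Fintype.sum_prod_type, smul_sum]
  refine sum_congr rfl fun t _ => ?_
  set p := net.pos (net.cls i) i
  refine (Fintype.sum_apply_eq_card_smul_sum (β := fun l => ZMod (net.κ l)) (net.cls i)
    fun z => if (p - z).val ∈ Ico (lo t.1 (net.cls i)) (hi t.1 (net.cls i)) then g t else 0).trans
    (congrArg _ ?_)
  rw [← sum_filter, sum_const, ← ZMod.card_filter_val_mem_Ico (lo := lo t.1 (net.cls i)) (h t)]
  exact congrArg (· • g t) (card_equiv (Equiv.subLeft p) (by simp))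

end Network

namespace RAGame

variable {n k : ℕ} {R : Type*} [Fintype R] [DecidableEq R]

def utilOn (v : R → ℝ) (net : Network n k) (f : Fin k → ℕ → ℝ) (A : Fin n → Finset R)
    (i : Fin n) : ℝ :=
  ∑ ρ ∈ A i, v ρ * f (net.cls i) #{i' ∈ net.Nb (net.cls i) | ρ ∈ A i'}

def liftProfile (A : Fin n → Finset R) (i : Fin n) : Finset (Fin (Fintype.card R)) :=
  (A i).map (Fintype.equivFin R).toEmbedding

-- Reducible, so that profiles over `Fin (Fintype.card R)` are profiles of this game.
abbrev ofProfiles (v : R → ℝ) (hv : ∀ r, 0 ≤ v r) (A B : Fin n → Finset R) : RAGame n where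
  m := Fintype.card R
  v r := v ((Fintype.equivFin R).symm r)
  v_nonneg _ := hv _
  act i := {liftProfile A i, liftProfile B i}
  act_nonempty _ := insert_nonempty _ _

variable (v : R → ℝ) {hv : ∀ r, 0 ≤ v r} (A B : Fin n → Finset R)

lemma cnt_liftProfile (A' : Fin n → Finset R) (S : Finset (Fin n)) (ρ : R) :
    (ofProfiles v hv A B).cnt (liftProfile A') S (Fintype.equivFin R ρ) = #{i ∈ S | ρ ∈ A' i} := by
  simp [cnt, liftProfile]

lemma welf_liftProfile (w : ℕ → ℝ) (A' : Fin n → Finset R) :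
    (ofProfiles v hv A B).welf w (liftProfile A') = ∑ ρ, v ρ * w #{i | ρ ∈ A' i} := by
  rw [welf, ← (Fintype.equivFin R).sum_comp]
  simp [cnt_liftProfile]

lemma util_liftProfile (net : Network n k) (f : Fin k → ℕ → ℝ) (A' : Fin n → Finset R)
    (i : Fin n) : (ofProfiles v hv A B).util net f (liftProfile A') i = utilOn v net f A' i := by
  rw [util, liftProfile, sum_map]
  simp [cnt_liftProfile, utilOn]

omit [DecidableEq R] in
lemma update_liftProfile (A' : Fin n → Finset R) (i : Fin n) (b : Finset R) :
    Function.update (liftProfile A') i (b.map (Fintype.equivFin R).toEmbedding)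
      = liftProfile (Function.update A' i b) := by
  funext i'
  by_cases h : i' = i
  · subst h
    simp [liftProfile]
  · simp [liftProfile, h]

lemma isNash_ofProfiles (net : Network n k) (f : Fin k → ℕ → ℝ)
    (h : ∀ i, utilOn v net f (Function.update A i (B i)) i ≤ utilOn v net f A i) :
    (ofProfiles v hv A B).IsNash net f (liftProfile A) := by
  refine ⟨fun i => mem_insert_self _ _, fun i b hb => ?_⟩
  rcases mem_insert.1 hb with rfl | hb
  · simp
  · rw [mem_singleton.1 hb, liftProfile, update_liftProfile, util_liftProfile, util_liftProfile]
    exact h i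

end RAGame

namespace Network

variable {n k : ℕ} (net : Network n k) (θ : Iset n k net.κ → ℝ)

def cellValue (ρ : net.Cell) : ℝ := θ ρ.1 / Fintype.card net.Anchors

lemma sum_cellValue_mul (g : Iset n k net.κ → ℝ) :
    ∑ ρ : net.Cell, net.cellValue θ ρ * g ρ.1 = ∑ t ∈ (Iset n k net.κ).attach, g t * θ t := by
  rw [Fintype.sum_prod_type, ← univ_eq_attach]
  refine sum_congr rfl fun t _ => ?_
  have : (Fintype.card net.Anchors : ℝ) ≠ 0 := Nat.cast_ne_zero.2 Fintype.card_ne_zero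
  simp only [cellValue, sum_const, card_univ, nsmul_eq_mul]
  field_simp

lemma utilOn_neAct (f : Fin k → ℕ → ℝ) (i : Fin n) :
    RAGame.utilOn (net.cellValue θ) net f net.neAct i
      = Fintype.card (∀ l : {l // l ≠ net.cls i}, ZMod (net.κ l)) • ∑ t,
          (aI t.1 (net.cls i) + xI t.1 (net.cls i)) •
            (θ t / Fintype.card net.Anchors * f (net.cls i) (Atj net t.1 (net.cls i))) := by
  simp_rw [RAGame.utilOn, card_Nb_neAct]
  exact net.sum_windowAct _ _ i
    (fun t => by have := net.aI_add_xI_add_bI_le t (net.cls i); omega)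
    fun t => θ t / Fintype.card net.Anchors * f (net.cls i) (Atj net t.1 (net.cls i))

lemma utilOn_update_optAct (f : Fin k → ℕ → ℝ) (i : Fin n) :
    RAGame.utilOn (net.cellValue θ) net f (Function.update net.neAct i (net.optAct i)) i
      = Fintype.card (∀ l : {l // l ≠ net.cls i}, ZMod (net.κ l)) • ∑ t,
          xI t.1 (net.cls i) •
            (θ t / Fintype.card net.Anchors * f (net.cls i) (Atj net t.1 (net.cls i)))
        + Fintype.card (∀ l : {l // l ≠ net.cls i}, ZMod (net.κ l)) • ∑ t,
          bI t.1 (net.cls i) •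
            (θ t / Fintype.card net.Anchors * f (net.cls i) (Atj net t.1 (net.cls i) + 1)) := by
  have hle := fun t => net.aI_add_xI_add_bI_le t (net.cls i)
  have hpt : ∀ ρ ∈ net.optAct i, net.cellValue θ ρ * f (net.cls i)
      #{i' ∈ net.Nb (net.cls i) | ρ ∈ Function.update net.neAct i (net.optAct i) i'}
        = if ρ ∈ net.neAct i
          then θ ρ.1 / Fintype.card net.Anchors * f (net.cls i) (Atj net ρ.1.1 (net.cls i))
          else θ ρ.1 / Fintype.card net.Anchors *
            f (net.cls i) (Atj net ρ.1.1 (net.cls i) + 1) := by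
    intro ρ hρ
    have hcnt := card_filter_update_add net.neAct (net.mem_Nb i) (net.optAct i) ρ
    rw [card_Nb_neAct, if_pos hρ] at hcnt
    split_ifs at hcnt ⊢ <;> rw [cellValue, Nat.add_right_cancel hcnt]
  have hwin_ne : (net.optAct i).filter (· ∈ net.neAct i)
      = net.windowAct aI (fun t j => aI t j + xI t j) i := by
    ext ρ
    simp only [optAct, neAct, windowAct, mem_filter, mem_univ, true_and, mem_Ico]
    omega
  have hwin_opt : (net.optAct i).filter (· ∉ net.neAct i)
      = net.windowAct (fun t j => aI t j + xI t j) (fun t j => aI t j + xI t j + bI t j) i := by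
    ext ρ
    simp only [optAct, neAct, windowAct, mem_filter, mem_univ, true_and, mem_Ico]
    omega
  rw [RAGame.utilOn, Function.update_self, sum_congr rfl hpt,
    sum_ite, hwin_ne, hwin_opt,
    net.sum_windowAct _ _ i (fun t => by have := hle t; omega)
      fun t => θ t / Fintype.card net.Anchors * f (net.cls i) (Atj net t.1 (net.cls i)),
    net.sum_windowAct _ _ i hle
      fun t => θ t / Fintype.card net.Anchors * f (net.cls i) (Atj net t.1 (net.cls i) + 1)]
  simp

/-- The loss from deviating to `optAct` is a nonnegative multiple of the left-hand side of the
primal LP constraint of the agent's class. -/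
lemma utilOn_neAct_sub_utilOn_update (f : Fin k → ℕ → ℝ) (i : Fin n) :
    RAGame.utilOn (net.cellValue θ) net f net.neAct i
      - RAGame.utilOn (net.cellValue θ) net f (Function.update net.neAct i (net.optAct i)) i
      = Fintype.card (∀ l : {l // l ≠ net.cls i}, ZMod (net.κ l)) / Fintype.card net.Anchors *
          ∑ t ∈ (Iset n k net.κ).attach,
            ((aI t.1 (net.cls i) : ℝ) * f (net.cls i) (Atj net t.1 (net.cls i))
              - (bI t.1 (net.cls i) : ℝ) * f (net.cls i) (Atj net t.1 (net.cls i) + 1)) * θ t := by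
  rw [utilOn_neAct, utilOn_update_optAct, ← univ_eq_attach]
  simp only [nsmul_eq_mul, mul_sum, ← sum_add_distrib, ← sum_sub_distrib]
  refine sum_congr rfl fun t _ => ?_
  push_cast
  ring

theorem exists_game_of_primalFeasible {w : ℕ → ℝ} {f : Fin k → ℕ → ℝ}
    (hθ : PrimalFeasible n k net w f θ) :
    ∃ G : RAGame n, GoodGame G w ∧ ∃ ane, G.IsNash net f ane ∧ G.welf w ane = 1 ∧
      ∃ aopt, G.IsProfile aopt ∧ G.welf w aopt = primalObj n k net.κ w θ := by
  obtain ⟨hθ0, hθf, hθ1⟩ := hθ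
  have hv (ρ : net.Cell) : 0 ≤ net.cellValue θ ρ := div_nonneg (hθ0 ρ.1) (Nat.cast_nonneg _)
  set G := RAGame.ofProfiles (net.cellValue θ) hv net.neAct net.optAct
  have hne : G.welf w (RAGame.liftProfile net.neAct) = 1 := by
    rw [RAGame.welf_liftProfile]
    simp_rw [card_neAct]
    exact (net.sum_cellValue_mul θ fun t => w (AtI t.1)).trans hθ1
  have hopt : G.welf w (RAGame.liftProfile net.optAct) = primalObj n k net.κ w θ := by
    rw [RAGame.welf_liftProfile]
    simp_rw [card_optAct]
    exact net.sum_cellValue_mul θ fun t => w (BtI t.1)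
  have hnash : G.IsNash net f (RAGame.liftProfile net.neAct) := by
    refine RAGame.isNash_ofProfiles _ _ _ net f fun i => sub_nonneg.1 ?_
    rw [utilOn_neAct_sub_utilOn_update]
    exact mul_nonneg (by positivity) (hθf (net.cls i))
  exact ⟨G, ⟨_, hnash.1, hne ▸ one_pos⟩, _, hnash, hne, _,
    fun i => mem_insert_of_mem (mem_singleton_self _), hopt⟩

end Network

section WelfareBound

variable {n k : ℕ} {w : ℕ → ℝ}

lemma exists_nonneg_forall_le {α : Type*} (s : Finset α) (g : α → ℝ) :
    ∃ B, 0 ≤ B ∧ ∀ x ∈ s, g x ≤ B :=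
  ⟨∑ x ∈ s, |g x|, sum_nonneg fun _ _ => abs_nonneg _, fun _ hx =>
    (le_abs_self _).trans (single_le_sum (f := fun x => |g x|) (fun _ _ => abs_nonneg _) hx)⟩

lemma IsBasis.nonneg (hw : IsBasis n w) {c : ℕ} (hc : c ≤ n) : 0 ≤ w c := by
  rcases Nat.eq_zero_or_pos c with rfl | h
  · exact hw.1.ge
  · exact (hw.2 c h hc).le

lemma IsBasis.exists_pos_le (hw : IsBasis n w) : ∃ ε > 0, ∀ c, 1 ≤ c → c ≤ n → ε ≤ w c := by
  refine ⟨(insert 1 ((Icc 1 n).image w)).min' (insert_nonempty _ _), (lt_min'_iff _ _).2 ?_,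
    fun c h1 h2 => min'_le _ _ (mem_insert_of_mem (mem_image_of_mem w (mem_Icc.2 ⟨h1, h2⟩)))⟩
  simp only [mem_insert, mem_image, mem_Icc]
  rintro _ (rfl | ⟨c, ⟨h1, h2⟩, rfl⟩)
  exacts [one_pos, hw.2 c h1 h2]

namespace RAGame

variable (G : RAGame n)

lemma cnt_le (a : Fin n → Finset (Fin G.m)) (S : Finset (Fin n)) (r : Fin G.m) :
    G.cnt a S r ≤ n :=
  (card_filter_le _ _).trans ((card_le_univ _).trans (Fintype.card_fin n).le)

lemma welf_nonneg (hw : IsBasis n w) (a : Fin n → Finset (Fin G.m)) : 0 ≤ G.welf w a :=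
  sum_nonneg fun r _ => mul_nonneg (G.v_nonneg r) (hw.nonneg (G.cnt_le a univ r))

lemma cnt_eq_zero_of_notMem_biUnion {a : Fin n → Finset (Fin G.m)} {r : Fin G.m}
    (hr : r ∉ univ.biUnion a) (S : Finset (Fin n)) : G.cnt a S r = 0 :=
  card_eq_zero.2 (filter_eq_empty_iff.2 fun i _ hi => hr (mem_biUnion.2 ⟨i, mem_univ _, hi⟩))

lemma mul_sum_biUnion_le_welf (hw : IsBasis n w) {ε : ℝ} (hε : ∀ c, 1 ≤ c → c ≤ n → ε ≤ w c)
    (a : Fin n → Finset (Fin G.m)) : ε * ∑ r ∈ univ.biUnion a, G.v r ≤ G.welf w a := by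
  rw [mul_sum]
  calc ∑ r ∈ univ.biUnion a, ε * G.v r
      ≤ ∑ r ∈ univ.biUnion a, G.v r * w (G.cnt a univ r) := sum_le_sum fun r hr => ?_
    _ ≤ G.welf w a := sum_le_sum_of_subset_of_nonneg (subset_univ _) fun r _ _ =>
        mul_nonneg (G.v_nonneg r) (hw.nonneg (G.cnt_le a univ r))
  obtain ⟨i, -, hi⟩ := mem_biUnion.1 hr
  rw [mul_comm]
  exact mul_le_mul_of_nonneg_left
    (hε _ (card_pos.2 ⟨i, mem_filter.2 ⟨mem_univ _, hi⟩⟩) (G.cnt_le _ _ _)) (G.v_nonneg r)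

lemma welf_le_mul_sum (hw : IsBasis n w) {W : ℝ} (hW : ∀ c ≤ n, w c ≤ W)
    (a : Fin n → Finset (Fin G.m)) : G.welf w a ≤ W * ∑ i, ∑ r ∈ a i, G.v r := by
  have hwc : ∀ c ≤ n, w c ≤ W * c := by
    intro c hc
    rcases Nat.eq_zero_or_pos c with rfl | h
    · simp [hw.1]
    · have : 1 ≤ (c : ℝ) := by exact_mod_cast h
      nlinarith [hw.2 c h hc, hW c hc]
  calc G.welf w a ≤ ∑ r, G.v r * (W * G.cnt a univ r) :=
        sum_le_sum fun r _ => mul_le_mul_of_nonneg_left (hwc _ (G.cnt_le _ _ _)) (G.v_nonneg r)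
    _ = W * ∑ r, G.v r * #{i | r ∈ a i} := by
        rw [mul_sum]
        exact sum_congr rfl fun r _ => by unfold cnt; ring
    _ = W * ∑ i, ∑ r ∈ a i, G.v r := by rw [sum_mul_card_filter_mem]

variable {net : Network n k} {f : Fin k → ℕ → ℝ} {F : ℝ}

lemma abs_sum_v_mul_le (hF : ∀ j, ∀ c ≤ n, |f j c| ≤ F) (s : Finset (Fin G.m)) (j : Fin k)
    (c : Fin G.m → ℕ) (hc : ∀ r, c r ≤ n) :
    |∑ r ∈ s, G.v r * f j (c r)| ≤ F * ∑ r ∈ s, G.v r := by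
  rw [mul_sum]
  refine (abs_sum_le_sum_abs _ _).trans (sum_le_sum fun r _ => ?_)
  rw [abs_mul, abs_of_nonneg (G.v_nonneg r), mul_comm]
  exact mul_le_mul_of_nonneg_right (hF j _ (hc r)) (G.v_nonneg r)

lemma sum_v_le_sum_biUnion {a : Fin n → Finset (Fin G.m)} {s : Finset (Fin G.m)}
    (hs : s ⊆ univ.biUnion a) : ∑ r ∈ s, G.v r ≤ ∑ r ∈ univ.biUnion a, G.v r :=
  sum_le_sum_of_subset_of_nonneg hs fun r _ _ => G.v_nonneg r

lemma util_le_mul_sum_biUnion (hF : ∀ j, ∀ c ≤ n, |f j c| ≤ F) (hF0 : 0 ≤ F)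
    (a : Fin n → Finset (Fin G.m)) (i : Fin n) :
    G.util net f a i ≤ F * ∑ r ∈ univ.biUnion a, G.v r :=
  (le_abs_self _).trans <| (G.abs_sum_v_mul_le hF _ _ _ fun _ => G.cnt_le _ _ _).trans <|
    mul_le_mul_of_nonneg_left
      (G.sum_v_le_sum_biUnion fun _ hr => mem_biUnion.2 ⟨i, mem_univ _, hr⟩) hF0

lemma cnt_update_of_notMem_biUnion {a : Fin n → Finset (Fin G.m)} {i : Fin n}
    {S : Finset (Fin n)} (hi : i ∈ S) {b : Finset (Fin G.m)} {r : Fin G.m} (hb : r ∈ b)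
    (hr : r ∉ univ.biUnion a) : G.cnt (Function.update a i b) S r = 1 := by
  have h := card_filter_update_add a hi b r
  rw [if_pos hb, if_neg fun h' => hr (mem_biUnion.2 ⟨i, mem_univ _, h'⟩)] at h
  have h0 := G.cnt_eq_zero_of_notMem_biUnion hr S
  unfold cnt at h0 ⊢
  omega

/-- A deviation earns `f j 1` per unit of value on the resources left unoccupied by `a`. -/
lemma mul_sum_sub_le_util_update (hF : ∀ j, ∀ c ≤ n, |f j c| ≤ F) (hF0 : 0 ≤ F)
    (a : Fin n → Finset (Fin G.m)) (i : Fin n) (b : Finset (Fin G.m)) :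
    f (net.cls i) 1 * ∑ r ∈ b.filter (· ∉ univ.biUnion a), G.v r
        - F * ∑ r ∈ univ.biUnion a, G.v r
      ≤ G.util net f (Function.update a i b) i := by
  rw [util, Function.update_self, ← sum_filter_not_add_sum_filter b (· ∈ univ.biUnion a),
    mul_sum, sub_eq_add_neg]
  refine add_le_add (sum_le_sum fun r hr => ?_) ((neg_le_neg ?_).trans (neg_abs_le _))
  · obtain ⟨hrb, hrO⟩ := mem_filter.1 hr
    rw [G.cnt_update_of_notMem_biUnion (net.mem_Nb i) hrb hrO, mul_comm]
  · exact (G.abs_sum_v_mul_le hF _ _ _ fun _ => G.cnt_le _ _ _).trans <|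
      mul_le_mul_of_nonneg_left (G.sum_v_le_sum_biUnion fun r hr => (mem_filter.1 hr).2) hF0

lemma sum_v_le_of_isNash (hF : ∀ j, ∀ c ≤ n, |f j c| ≤ F) (hF0 : 0 ≤ F) (hf1 : ∀ j, 0 < f j 1)
    {a : Fin n → Finset (Fin G.m)} (ha : G.IsNash net f a) (i : Fin n) {b : Finset (Fin G.m)}
    (hb : b ∈ G.act i) :
    ∑ r ∈ b, G.v r ≤ (1 + 2 * F / f (net.cls i) 1) * ∑ r ∈ univ.biUnion a, G.v r := by
  have hfree : ∑ r ∈ b.filter (· ∉ univ.biUnion a), G.v r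
      ≤ 2 * F / f (net.cls i) 1 * ∑ r ∈ univ.biUnion a, G.v r := by
    rw [← mul_div_right_comm, le_div_iff₀ (hf1 _)]
    linarith [ha.2 i b hb, G.mul_sum_sub_le_util_update (net := net) hF hF0 a i b,
      G.util_le_mul_sum_biUnion (net := net) hF hF0 a i]
  rw [← sum_filter_add_sum_filter_not b (· ∈ univ.biUnion a)]
  linarith [G.sum_v_le_sum_biUnion (s := b.filter (· ∈ univ.biUnion a)) fun r hr =>
    (mem_filter.1 hr).2]

end RAGame

theorem exists_welf_le_mul_welf_of_isNash (hw : IsBasis n w) (net : Network n k)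
    (f : Fin k → ℕ → ℝ) (hf1 : ∀ j, 0 < f j 1) :
    ∃ M, ∀ (G : RAGame n) (a b : Fin n → Finset (Fin G.m)), G.IsNash net f a → G.IsProfile b →
      G.welf w b ≤ M * G.welf w a := by
  obtain ⟨ε, hε0, hε⟩ := hw.exists_pos_le
  obtain ⟨W, hW0, hW⟩ := exists_nonneg_forall_le (range (n + 1)) w
  obtain ⟨F, hF0, hF⟩ :=
    exists_nonneg_forall_le (univ ×ˢ range (n + 1)) fun p : Fin k × ℕ => |f p.1 p.2|
  set C := fun i => 1 + 2 * F / f (net.cls i) 1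
  have hC (i : Fin n) : 0 ≤ C i := by
    have := hf1 (net.cls i)
    positivity
  refine ⟨W * ∑ i, C i / ε, fun G a b ha hb => ?_⟩
  calc G.welf w b ≤ W * ∑ i, ∑ r ∈ b i, G.v r :=
        G.welf_le_mul_sum hw (fun c hc => hW c (mem_range.2 (by omega))) b
    _ ≤ W * ∑ i, C i * ∑ r ∈ univ.biUnion a, G.v r := by
        gcongr with i
        exact G.sum_v_le_of_isNash (fun j c hc => hF (j, c) (by simp; omega)) hF0 hf1 ha i (hb i)
    _ = (W * ∑ i, C i / ε) * (ε * ∑ r ∈ univ.biUnion a, G.v r) := by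
        rw [← sum_mul, ← sum_div]
        field_simp
    _ ≤ (W * ∑ i, C i / ε) * G.welf w a :=
        mul_le_mul_of_nonneg_left (G.mul_sum_biUnion_le_welf hw hε a)
          (mul_nonneg hW0 (sum_nonneg fun i _ => div_nonneg (hC i) hε0.le))

end WelfareBound

end

theorem feasible_theta_realized_by_game_general {n k : ℕ} (w : ℕ → ℝ)
    (hw : IsBasis n w) (net : Network n k) (f : Fin k → ℕ → ℝ)
    (hfpos : ∀ j, 0 < f j 1) :
    (∀ θ, PrimalFeasible n k net w f θ →
      ∃ G : RAGame n, GoodGame G w ∧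
        ∃ ane, G.IsNash net f ane ∧ G.welf w ane = 1 ∧
          ∃ aopt, G.IsProfile aopt ∧ G.welf w aopt = primalObj n k net.κ w θ) ∧
    sSup (PrimalVals n k net w f) ≤
      sSup {x | ∃ G : RAGame n, GoodGame G w ∧
        ∃ ane, G.IsNash net f ane ∧ G.welf w ane = 1 ∧
          ∃ aopt, G.IsProfile aopt ∧ x = G.welf w aopt} := by
  refine ⟨fun θ hθ => net.exists_game_of_primalFeasible θ hθ,
    Real.sSup_le ?_ (Real.sSup_nonneg ?_)⟩
  · obtain ⟨M, hM⟩ := exists_welf_le_mul_welf_of_isNash hw net f hfpos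
    rintro x ⟨θ, hθ, rfl⟩
    obtain ⟨G, hG, a, ha, ha1, b, hb, hbθ⟩ := net.exists_game_of_primalFeasible θ hθ
    refine le_csSup ⟨M, ?_⟩ ⟨G, hG, a, ha, ha1, b, hb, hbθ.symm⟩
    rintro _ ⟨G, -, a, ha, ha1, b, hb, rfl⟩
    simpa [ha1] using hM G a b ha hb
  · rintro x ⟨G, -, -, -, -, b, -, rfl⟩
    exact G.welf_nonneg hw b

/-- Lemma 2: every primal-feasible `θ` is realized by a game of `𝓖` with a
pure Nash equilibrium of welfare `1` and a profile of welfare equal to the LP objective;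
consequently the supremum over such games dominates the primal LP value `W*`. -/
theorem feasible_theta_realized_by_game {n k : ℕ} (hn : 1 ≤ n) (w : ℕ → ℝ)
    (hw : IsBasis n w) (net : Network n k) (f : Fin k → ℕ → ℝ) (hf : IsMech net f)
    (hfpos : ∀ j, 0 < f j 1) :
    (∀ θ, PrimalFeasible n k net w f θ →
      ∃ G : RAGame n, GoodGame G w ∧
        ∃ ane, G.IsNash net f ane ∧ G.welf w ane = 1 ∧
          ∃ aopt, G.IsProfile aopt ∧ G.welf w aopt = primalObj n k net.κ w θ) ∧
    sSup (PrimalVals n k net w f) ≤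
      sSup {x | ∃ G : RAGame n, GoodGame G w ∧
        ∃ ane, G.IsNash net f ane ∧ G.welf w ane = 1 ∧
          ∃ aopt, G.IsProfile aopt ∧ x = G.welf w aopt} :=
  feasible_theta_realized_by_game_general w hw net f hfpos
end

section
/- (Constraint reduction from 𝓘 to 𝓘_R.) Fix n, a basis function w with w(0) = 0, a network (𝓒,𝓝), and a mechanism f = (f_1,…,f_k) with f_j(0) = f_j(|𝓝_j|+1) = 0. Let λ_1,…,λ_k ≥ 0 and μ ∈ ℝ. Then the family of inequalities w(B_t) + Σ_{j=1}^k λ_j [a_j f_j(A_{t,j}) − b_j f_j(A_{t,j}+1)] ≤ μ · w(A_t) holds for all t ∈ 𝓘 if and only if it holds for all t ∈ 𝓘_R. -/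
open Finset

/-!
Replacing the triple `(a_j, x_j, b_j)` of one class by `(a_j + δ, x_j - δ, b_j + δ)` changes
neither `A_t`, `B_t` nor any `A_{t,l}`, so the slack of the constraint is affine in `δ`. If class
`j` violates the condition of `𝓘_R`, i.e. `a_j, x_j, b_j > 0` and `a_j + x_j + b_j < κ_j`, then
`δ = -min a_j b_j` and `δ = min x_j (κ_j - a_j - x_j - b_j)` are both admissible, of opposite
signs, and both repair class `j`; the slack at `t` is a convex combination of the two new slacks.
Induction on the set of violating classes concludes.
-/

namespace Network

variable {n k : ℕ}

theorem sum_κ (net : Network n k) : ∑ j, net.κ j = n := by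
  classical
  simpa [κ, classSet] using
    (card_eq_sum_card_fiberwise (s := univ) (t := univ) fun i _ => mem_univ (net.cls i)).symm

end Network

section ConstraintReduction

variable {n k : ℕ}

def badClasses (κ : Fin k → ℕ) (t : Idx n k) : Finset (Fin k) :=
  univ.filter fun j => ¬(aI t j * xI t j * bI t j = 0 ∨ aI t j + xI t j + bI t j = κ j)

theorem mem_IRset_iff {κ : Fin k → ℕ} {t : Idx n k} :
    t ∈ IRset n k κ ↔ t ∈ Iset n k κ ∧ badClasses κ t = ∅ := by
  simp only [IRset, badClasses, mem_filter, filter_eq_empty_iff, mem_univ, true_implies, not_not]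

def SameMarginals (t t' : Idx n k) : Prop :=
  ∀ l, aI t' l + xI t' l = aI t l + xI t l ∧ bI t' l + xI t' l = bI t l + xI t l

theorem SameMarginals.AtI_eq {t t' : Idx n k} (h : SameMarginals t t') : AtI t' = AtI t :=
  sum_congr rfl fun l _ => (h l).1

theorem SameMarginals.BtI_eq {t t' : Idx n k} (h : SameMarginals t t') : BtI t' = BtI t :=
  sum_congr rfl fun l _ => (h l).2

theorem SameMarginals.Atj_eq {t t' : Idx n k} (h : SameMarginals t t') (net : Network n k)
    (j : Fin k) : Atj net t' j = Atj net t j :=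
  sum_congr rfl fun l _ => (h l).1

theorem SameMarginals.mem_Iset {κ : Fin k → ℕ} (hκ : ∑ l, κ l ≤ n) {t t' : Idx n k}
    (h : SameMarginals t t') (ht : t ∈ Iset n k κ)
    (hle : ∀ l, aI t' l + xI t' l + bI t' l ≤ κ l) : t' ∈ Iset n k κ := by
  simp only [Iset, mem_filter, mem_univ, true_and] at ht ⊢
  refine ⟨hle, ?_, (sum_le_sum fun l _ => hle l).trans hκ⟩
  -- a class is empty exactly when both of its marginals vanish
  by_contra! h0
  have hall : ∀ l, aI t l + xI t l + bI t l = 0 := fun l => by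
    have := (sum_eq_zero_iff.mp (Nat.lt_one_iff.mp h0)) l (mem_univ l)
    have := h l
    omega
  simp [hall] at ht

theorem exists_sameMarginals_update {κ : Fin k → ℕ} (hκ : ∑ l, κ l ≤ n) {t : Idx n k}
    (ht : t ∈ Iset n k κ) {j : Fin k} {a x b : ℕ} (hle : a + x + b ≤ κ j)
    (ha : a + x = aI t j + xI t j) (hb : b + x = bI t j + xI t j) :
    ∃ t' ∈ Iset n k κ, SameMarginals t t' ∧ (∀ l ≠ j, t' l = t l) ∧
      aI t' j = a ∧ xI t' j = x ∧ bI t' j = b := by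
  have hn : a + x + b ≤ n := hle.trans ((single_le_sum (fun l _ => Nat.zero_le _)
    (mem_univ j)).trans hκ)
  set t' := Function.update t j (⟨a, by omega⟩, ⟨x, by omega⟩, ⟨b, by omega⟩)
  have hoff : ∀ l ≠ j, t' l = t l := fun l hl => Function.update_of_ne hl _ _
  have hj : aI t' j = a ∧ xI t' j = x ∧ bI t' j = b := by simp [t', aI, xI, bI]
  have hmarg : SameMarginals t t' := fun l => by
    rcases eq_or_ne l j with rfl | hl
    · omega
    · simp [aI, xI, bI, hoff l hl]
  refine ⟨t', hmarg.mem_Iset hκ ht fun l => ?_, hmarg, hoff, hj⟩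
  rcases eq_or_ne l j with rfl | hl
  · omega
  · simpa [aI, xI, bI, hoff l hl] using (mem_filter.mp ht).2.1 l

theorem badClasses_ssubset {κ : Fin k → ℕ} {t t' : Idx n k} {j : Fin k}
    (hj : j ∈ badClasses κ t) (hoff : ∀ l ≠ j, t' l = t l) (hj' : j ∉ badClasses κ t') :
    badClasses κ t' ⊂ badClasses κ t := by
  refine ssubset_of_subset_of_ne (fun l hl => ?_) (fun h => hj' (h ▸ hj))
  rcases eq_or_ne l j with rfl | hlj
  · exact absurd hl hj'
  · simpa [badClasses, aI, xI, bI, hoff l hlj] using hl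

def dualSlack (net : Network n k) (w : ℕ → ℝ) (f : Fin k → ℕ → ℝ) (lam : Fin k → ℝ) (μ : ℝ)
    (t : Idx n k) : ℝ :=
  μ * w (AtI t) -
    (w (BtI t) +
      ∑ j, lam j * ((aI t j : ℝ) * f j (Atj net t j) - (bI t j : ℝ) * f j (Atj net t j + 1)))

theorem dualConstr_iff_dualSlack_nonneg (net : Network n k) (w : ℕ → ℝ) (f : Fin k → ℕ → ℝ)
    (lam : Fin k → ℝ) (μ : ℝ) (t : Idx n k) :
    DualConstr net w f lam μ t ↔ 0 ≤ dualSlack net w f lam μ t :=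
  sub_nonneg.symm

theorem SameMarginals.dualSlack_eq {t t' : Idx n k} (h : SameMarginals t t') {j : Fin k}
    (hoff : ∀ l ≠ j, xI t' l = xI t l) (net : Network n k) (w : ℕ → ℝ) (f : Fin k → ℕ → ℝ)
    (lam : Fin k → ℝ) (μ : ℝ) :
    dualSlack net w f lam μ t' = dualSlack net w f lam μ t +
      lam j * ((xI t' j : ℝ) - xI t j) * (f j (Atj net t j) - f j (Atj net t j + 1)) := by
  have hterm : ∀ l, lam l * ((aI t' l : ℝ) * f l (Atj net t l) -
        (bI t' l : ℝ) * f l (Atj net t l + 1)) -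
      lam l * ((aI t l : ℝ) * f l (Atj net t l) - (bI t l : ℝ) * f l (Atj net t l + 1)) =
      -(lam l * ((xI t' l : ℝ) - xI t l) * (f l (Atj net t l) - f l (Atj net t l + 1))) := by
    intro l
    have ha : (aI t' l : ℝ) + xI t' l = aI t l + xI t l := by exact_mod_cast (h l).1
    have hb : (bI t' l : ℝ) + xI t' l = bI t l + xI t l := by exact_mod_cast (h l).2
    linear_combination lam l * f l (Atj net t l) * ha - lam l * f l (Atj net t l + 1) * hb
  have hsum := sum_sub_distrib (s := univ) (f := fun l => lam l * ((aI t' l : ℝ) *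
    f l (Atj net t l) - (bI t' l : ℝ) * f l (Atj net t l + 1))) (g := fun l => lam l *
    ((aI t l : ℝ) * f l (Atj net t l) - (bI t l : ℝ) * f l (Atj net t l + 1)))
  rw [sum_congr rfl fun l _ => hterm l, sum_neg_distrib,
    sum_eq_single j (fun l _ hl => by simp [hoff l hl]) (by simp)] at hsum
  simp only [dualSlack, h.AtI_eq, h.BtI_eq, h.Atj_eq]
  linarith

theorem dualConstr_of_bad (net : Network n k) (w : ℕ → ℝ) (f : Fin k → ℕ → ℝ)
    (lam : Fin k → ℝ) (μ : ℝ) {t : Idx n k} (ht : t ∈ Iset n k net.κ) {j : Fin k}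
    (hj : j ∈ badClasses net.κ t)
    (H : ∀ t' ∈ Iset n k net.κ, badClasses net.κ t' ⊂ badClasses net.κ t →
      DualConstr net w f lam μ t') :
    DualConstr net w f lam μ t := by
  have hκ : ∑ l, net.κ l ≤ n := net.sum_κ.le
  have hbad : ¬(aI t j * xI t j * bI t j = 0 ∨ aI t j + xI t j + bI t j = net.κ j) :=
    (mem_filter.mp hj).2
  simp only [mul_eq_zero, not_or] at hbad
  obtain ⟨⟨⟨ha0, hx0⟩, hb0⟩, hκj⟩ := hbad
  have hle := (mem_filter.mp ht).2.1 j
  obtain ⟨d, hd⟩ : ∃ d, d = min (aI t j) (bI t j) := ⟨_, rfl⟩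
  obtain ⟨u, hu⟩ : ∃ u, u = min (xI t j) (net.κ j - (aI t j + xI t j + bI t j)) := ⟨_, rfl⟩
  obtain ⟨tD, hD, hmD, hoffD, haD, hxD, hbD⟩ := exists_sameMarginals_update hκ ht (j := j)
    (a := aI t j - d) (x := xI t j + d) (b := bI t j - d) (by omega) (by omega) (by omega)
  obtain ⟨tU, hU, hmU, hoffU, haU, hxU, hbU⟩ := exists_sameMarginals_update hκ ht (j := j)
    (a := aI t j + u) (x := xI t j - u) (b := bI t j + u) (by omega) (by omega) (by omega)
  have hgoodD : j ∉ badClasses net.κ tD := by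
    simp only [badClasses, mem_filter, mem_univ, true_and, not_not, haD, hxD, hbD]
    left
    rcases (by omega : aI t j - d = 0 ∨ bI t j - d = 0) with h | h <;> simp [h]
  have hgoodU : j ∉ badClasses net.κ tU := by
    simp only [badClasses, mem_filter, mem_univ, true_and, not_not, haU, hxU, hbU]
    rcases (by omega : xI t j - u = 0 ∨ aI t j + u + (xI t j - u) + (bI t j + u) = net.κ j)
      with h | h <;> simp [h]
  have hsD := (dualConstr_iff_dualSlack_nonneg ..).mp (H tD hD (badClasses_ssubset hj hoffD hgoodD))
  have hsU := (dualConstr_iff_dualSlack_nonneg ..).mp (H tU hU (badClasses_ssubset hj hoffU hgoodU))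
  rw [hmD.dualSlack_eq (fun l hl => by rw [xI, xI, hoffD l hl]), hxD] at hsD
  rw [hmU.dualSlack_eq (fun l hl => by rw [xI, xI, hoffU l hl]), hxU,
    Nat.cast_sub (by omega : u ≤ xI t j)] at hsU
  rw [dualConstr_iff_dualSlack_nonneg]
  have hd0 : (0 : ℝ) < d := by exact_mod_cast (by omega : 0 < d)
  have hu0 : (0 : ℝ) < u := by exact_mod_cast (by omega : 0 < u)
  push_cast at hsD hsU
  -- `(u + d) * slack t = u * slack tD + d * slack tU`
  nlinarith [mul_nonneg hu0.le hsD, mul_nonneg hd0.le hsU]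

theorem forall_Iset_of_forall_IRset {κ : Fin k → ℕ} {P : Idx n k → Prop}
    (hR : ∀ t ∈ IRset n k κ, P t)
    (step : ∀ t ∈ Iset n k κ, ∀ j ∈ badClasses κ t,
      (∀ t' ∈ Iset n k κ, badClasses κ t' ⊂ badClasses κ t → P t') → P t) :
    ∀ t ∈ Iset n k κ, P t := by
  intro t
  induction t using (InvImage.wf (badClasses κ) wellFounded_lt).induction with
  | _ t ih =>
    intro ht
    obtain hbad | ⟨j, hj⟩ := (badClasses κ t).eq_empty_or_nonempty
    · exact hR t (mem_IRset_iff.mpr ⟨ht, hbad⟩)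
    · exact step t ht j hj fun t' ht' hlt => ih t' hlt ht'

end ConstraintReduction

theorem constraint_reduction_general {n k : ℕ} (w : ℕ → ℝ)
    (net : Network n k) (f : Fin k → ℕ → ℝ)
    (lam : Fin k → ℝ) (μ : ℝ) :
    (∀ t ∈ Iset n k net.κ, DualConstr net w f lam μ t) ↔
      (∀ t ∈ IRset n k net.κ, DualConstr net w f lam μ t) :=
  ⟨fun h t ht => h t (mem_IRset_iff.mp ht).1, fun h =>
    forall_Iset_of_forall_IRset h fun _ ht _ hj => dualConstr_of_bad net w f lam μ ht hj⟩

/-- the dual constraints hold for all `t ∈ 𝓘` iff they hold for all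
`t ∈ 𝓘_R`. -/
theorem constraint_reduction {n k : ℕ} (hn : 1 ≤ n) (w : ℕ → ℝ) (hw : IsBasis n w)
    (net : Network n k) (f : Fin k → ℕ → ℝ) (hf : IsMech net f)
    (lam : Fin k → ℝ) (hlam : ∀ j, 0 ≤ lam j) (μ : ℝ) :
    (∀ t ∈ Iset n k net.κ, DualConstr net w f lam μ t) ↔
      (∀ t ∈ IRset n k net.κ, DualConstr net w f lam μ t) :=
  constraint_reduction_general w net f lam μ
end
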